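/- arXiv:2003.11771 — 7 statements merged into one kernel-verified Lean document; each statement's English description precedes it below -/
import Mathlib

section
/- For every ε ∈ (0,1) and every y ∈ [-ε, ε], one has y - ((3-ε)/(6(1-ε))) y² ≤ log(1+y) ≤ y - ((3-2ε)/6) y². -/
/-!
Both bounds come from third-order Taylor estimates valid for all `y > -1`:
`y - y²/2 + y³/(3(1+y)) ≤ log (1+y) ≤ y - y²/2 + y³/3`.
In each case the difference of the two sides vanishes at `0` and has derivative
`x³/(1+x)` resp. `x³/(3(1+x)²)`, which has the sign of `x`, so the difference is minimal at `0`.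
For `|y| ≤ ε` one then uses `y³ ≤ ε y²` on the right, and on the left that the gap to the cubic
bound is `y²(ε + y)/(3(1-ε)(1+y)) ≥ 0`.
-/

open Real Set

theorem le_of_hasDerivAt_of_sub_mul_deriv_nonneg {f f' : ℝ → ℝ} {s : Set ℝ} (hs : s.OrdConnected)
    {c y : ℝ} (hc : c ∈ s) (hy : y ∈ s) (hf : ∀ x ∈ s, HasDerivAt f (f' x) x)
    (hf' : ∀ x ∈ s, 0 ≤ (x - c) * f' x) : f c ≤ f y := by
  have hsub : uIcc c y ⊆ s := hs.uIcc_subset hc hy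
  have hcont : ContinuousOn f (uIcc c y) :=
    fun x hx => (hf x (hsub hx)).continuousAt.continuousWithinAt
  rcases le_total c y with hcy | hyc
  · rw [uIcc_of_le hcy] at hsub hcont
    refine monotoneOn_of_hasDerivWithinAt_nonneg (convex_Icc c y) hcont
      (fun x hx => (hf x (hsub (interior_subset hx))).hasDerivWithinAt) (fun x hx => ?_)
      (left_mem_Icc.2 hcy) (right_mem_Icc.2 hcy) hcy
    rw [interior_Icc] at hx
    exact nonneg_of_mul_nonneg_right (hf' x (hsub (Ioo_subset_Icc_self hx))) (sub_pos.2 hx.1)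
  · rw [uIcc_of_ge hyc] at hsub hcont
    refine antitoneOn_of_hasDerivWithinAt_nonpos (convex_Icc y c) hcont
      (fun x hx => (hf x (hsub (interior_subset hx))).hasDerivWithinAt) (fun x hx => ?_)
      (left_mem_Icc.2 hyc) (right_mem_Icc.2 hyc) hyc
    rw [interior_Icc] at hx
    exact nonpos_of_mul_nonneg_right (hf' x (hsub (Ioo_subset_Icc_self hx))) (sub_neg.2 hx.2)

theorem hasDerivAt_log_one_add {x : ℝ} (hx : -1 < x) :
    HasDerivAt (fun x => log (1 + x)) (1 / (1 + x)) x := by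
  simpa using ((hasDerivAt_id x).const_add 1).log (by simp; linarith)

theorem log_one_add_le_cubic {y : ℝ} (hy : -1 < y) :
    log (1 + y) ≤ y - y ^ 2 / 2 + y ^ 3 / 3 := by
  have hderiv : ∀ x ∈ Ioi (-1 : ℝ), HasDerivAt (fun x => x - x ^ 2 / 2 + x ^ 3 / 3 - log (1 + x))
      (x ^ 3 / (1 + x)) x := by
    intro x (hx : -1 < x)
    have hpos : 0 < 1 + x := by linarith
    refine ((((hasDerivAt_id x).sub ((hasDerivAt_pow 2 x).div_const 2)).add
      ((hasDerivAt_pow 3 x).div_const 3)).sub (hasDerivAt_log_one_add hx)).congr_deriv ?_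
    field_simp
    ring
  have key := le_of_hasDerivAt_of_sub_mul_deriv_nonneg ordConnected_Ioi
    (show (0 : ℝ) ∈ Ioi (-1) by norm_num) hy hderiv fun x (hx : -1 < x) => by
      have hpos : 0 < 1 + x := by linarith
      rw [show (x - 0) * (x ^ 3 / (1 + x)) = x ^ 4 / (1 + x) by ring]
      positivity
  norm_num at key
  linarith

theorem cubic_le_log_one_add {y : ℝ} (hy : -1 < y) :
    y - y ^ 2 / 2 + y ^ 3 / (3 * (1 + y)) ≤ log (1 + y) := by
  have hderiv : ∀ x ∈ Ioi (-1 : ℝ),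
      HasDerivAt (fun x => log (1 + x) - (x - x ^ 2 / 2 + x ^ 3 / (3 * (1 + x))))
        (x ^ 3 / (3 * (1 + x) ^ 2)) x := by
    intro x (hx : -1 < x)
    have hpos : 0 < 1 + x := by linarith
    have hden : HasDerivAt (fun x => 3 * (1 + x)) 3 x := by
      simpa using ((hasDerivAt_id x).const_add 1).const_mul (3 : ℝ)
    refine ((hasDerivAt_log_one_add hx).sub (((hasDerivAt_id x).sub
      ((hasDerivAt_pow 2 x).div_const 2)).add
        ((hasDerivAt_pow 3 x).div hden (by positivity)))).congr_deriv ?_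
    field_simp
    ring
  have key := le_of_hasDerivAt_of_sub_mul_deriv_nonneg ordConnected_Ioi
    (show (0 : ℝ) ∈ Ioi (-1) by norm_num) hy hderiv fun x (hx : -1 < x) => by
      have hpos : 0 < 1 + x := by linarith
      rw [show (x - 0) * (x ^ 3 / (3 * (1 + x) ^ 2)) = x ^ 4 / (3 * (1 + x) ^ 2) by ring]
      positivity
  norm_num at key
  linarith

/-- For every ε ∈ (0,1) and every y ∈ [-ε, ε],
    y - ((3-ε)/(6(1-ε))) y² ≤ log(1+y) ≤ y - ((3-2ε)/6) y². -/
theorem log_bounds (ε : ℝ) (hε : ε ∈ Set.Ioo (0 : ℝ) 1)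
    (y : ℝ) (hy : y ∈ Set.Icc (-ε) ε) :
    y - ((3 - ε) / (6 * (1 - ε))) * y ^ 2 ≤ Real.log (1 + y) ∧
      Real.log (1 + y) ≤ y - ((3 - 2 * ε) / 6) * y ^ 2 := by
  obtain ⟨hε0, hε1⟩ := hε
  obtain ⟨hyl, hyu⟩ := hy
  have hy1 : -1 < y := by linarith
  constructor
  · refine le_trans ?_ (cubic_le_log_one_add hy1)
    have h1y : 0 < 1 + y := by linarith
    have h1ε : 0 < 1 - ε := by linarith
    have hgap : y - y ^ 2 / 2 + y ^ 3 / (3 * (1 + y)) - (y - (3 - ε) / (6 * (1 - ε)) * y ^ 2)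
        = y ^ 2 * (ε + y) / (3 * (1 - ε) * (1 + y)) := by
      field_simp
      ring
    have : 0 ≤ y ^ 2 * (ε + y) / (3 * (1 - ε) * (1 + y)) :=
      div_nonneg (mul_nonneg (sq_nonneg y) (by linarith)) (by positivity)
    linarith
  · refine (log_one_add_le_cubic hy1).trans ?_
    nlinarith [mul_nonneg (sq_nonneg y) (sub_nonneg.2 hyu)]
end

section
/- If a ∈ L²(0,1) with ∫₀¹ a(t) dt = 0 and ∫₀¹ a²(t) dt = 1, and θₙ → 0 is a sequence of positive reals, then e₀ₙ := ∫₀¹ log(1 + θₙ a(t)) dt satisfies e₀ₙ = -(θₙ²/2)(1 + o(1)), i.e., e₀ₙ/θₙ² → -1/2 as n → ∞. -/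
/-!
Write `log (1 + x) = x - x²/2 + R(x)`. Since `∫ a = 0` and `∫ a² = 1`, integrating at `x = θₙ a(t)` gives
`e₀ₙ / θₙ² = -1/2 + ∫ R(θₙ a) / θₙ²`, and the last integral tends to `0` by dominated convergence:
`|R(x)| ≤ 2|x|³` near `0` gives the pointwise limit, and `|R(x)| ≤ x²` for `x ≥ -1/2` the domination by `a²`.
Positivity of `1 + θ₀ a` forces `θₙ a ≥ -1/2` as soon as `θₙ ≤ θ₀ / 2`.
-/

open MeasureTheory Filter Topology

noncomputable def logTaylorRemainder (x : ℝ) : ℝ := Real.log (1 + x) - x + x ^ 2 / 2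

lemma measurable_logTaylorRemainder : Measurable logTaylorRemainder := by
  unfold logTaylorRemainder
  fun_prop

lemma abs_logTaylorRemainder_le_of_abs_le_half {x : ℝ} (hx : |x| ≤ 1 / 2) :
    |logTaylorRemainder x| ≤ 2 * |x| ^ 3 := by
  have h := Real.abs_log_sub_add_sum_range_le (x := -x) (by rw [abs_neg]; linarith) 2
  norm_num [Finset.sum_range_succ] at h
  have hgeom : |x| ^ 3 / (1 - |x|) ≤ 2 * |x| ^ 3 := by
    rw [div_le_iff₀ (by linarith)]
    nlinarith [pow_nonneg (abs_nonneg x) 3]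
  calc |logTaylorRemainder x| = |-x + x ^ 2 / 2 + Real.log (1 + x)| := by
        unfold logTaylorRemainder; ring_nf
    _ ≤ 2 * |x| ^ 3 := h.trans hgeom

lemma abs_logTaylorRemainder_le_sq {x : ℝ} (hx : -(1 / 2) ≤ x) : |logTaylorRemainder x| ≤ x ^ 2 := by
  rcases le_or_gt x 0 with hx0 | hx0
  · have hx' : |x| ≤ 1 / 2 := abs_le.2 ⟨hx, by linarith⟩
    have : 2 * |x| ^ 3 ≤ x ^ 2 := by
      rw [← sq_abs x]; nlinarith [abs_nonneg x]
    exact (abs_logTaylorRemainder_le_of_abs_le_half hx').trans this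
  · have h1x : 0 < 1 + x := by linarith
    have hupper : Real.log (1 + x) ≤ x := by linarith [Real.log_le_sub_one_of_pos h1x]
    -- `1 - (1 + x)⁻¹ = x / (1 + x) ≥ x - x²`
    have hlower : x - x ^ 2 ≤ Real.log (1 + x) := by
      refine le_trans ?_ (Real.one_sub_inv_le_log_of_pos h1x)
      rw [le_sub_comm, inv_eq_one_div, div_le_iff₀ h1x]
      nlinarith [pow_pos hx0 3]
    unfold logTaylorRemainder
    rw [abs_le]
    constructor <;> nlinarith

lemma abs_logTaylorRemainder_mul_div_sq_le_of_abs_le_half {θ y : ℝ} (h : |θ * y| ≤ 1 / 2) :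
    |logTaylorRemainder (θ * y) / θ ^ 2| ≤ 2 * |θ| * |y| ^ 3 := by
  rw [abs_div, abs_of_nonneg (sq_nonneg θ)]
  refine div_le_of_le_mul₀ (sq_nonneg θ) (by positivity) ?_
  calc |logTaylorRemainder (θ * y)| ≤ 2 * |θ * y| ^ 3 := abs_logTaylorRemainder_le_of_abs_le_half h
    _ = 2 * |θ| * |y| ^ 3 * θ ^ 2 := by rw [abs_mul, ← sq_abs θ]; ring

lemma abs_logTaylorRemainder_mul_div_sq_le_sq {θ y : ℝ} (h : -(1 / 2) ≤ θ * y) :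
    |logTaylorRemainder (θ * y) / θ ^ 2| ≤ y ^ 2 := by
  rw [abs_div, abs_of_nonneg (sq_nonneg θ)]
  refine div_le_of_le_mul₀ (sq_nonneg θ) (sq_nonneg y) ?_
  calc |logTaylorRemainder (θ * y)| ≤ (θ * y) ^ 2 := abs_logTaylorRemainder_le_sq h
    _ = y ^ 2 * θ ^ 2 := by ring

lemma tendsto_logTaylorRemainder_mul_div_sq {ι : Type*} {l : Filter ι} {θ : ι → ℝ}
    (hθ : Tendsto θ l (𝓝 0)) (y : ℝ) :
    Tendsto (fun n => logTaylorRemainder (θ n * y) / θ n ^ 2) l (𝓝 0) := by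
  have hbound : Tendsto (fun n => 2 * |θ n| * |y| ^ 3) l (𝓝 0) := by
    simpa using ((hθ.abs.const_mul 2).mul_const (|y| ^ 3))
  have hsmall : ∀ᶠ n in l, |θ n * y| ≤ 1 / 2 := by
    have : Tendsto (fun n => |θ n * y|) l (𝓝 0) := by simpa using (hθ.mul_const y).abs
    exact this.eventually (ge_mem_nhds (by norm_num))
  refine squeeze_zero_norm' ?_ hbound
  filter_upwards [hsmall] with n hn
  exact abs_logTaylorRemainder_mul_div_sq_le_of_abs_le_half hn

lemma tendsto_integral_logTaylorRemainder_mul_div_sq {α ι : Type*} [MeasurableSpace α]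
    {μ : Measure α} {l : Filter ι} [l.IsCountablyGenerated] {a : α → ℝ} {θ : ι → ℝ}
    (ha : MemLp a 2 μ) (hθ : Tendsto θ l (𝓝 0))
    (hlb : ∀ᶠ n in l, ∀ᵐ t ∂μ, -(1 / 2) ≤ θ n * a t) :
    Tendsto (fun n => (∫ t, logTaylorRemainder (θ n * a t) ∂μ) / θ n ^ 2) l (𝓝 0) := by
  simp_rw [← integral_div]
  have hlim := tendsto_integral_filter_of_dominated_convergence (μ := μ)
    (F := fun n t => logTaylorRemainder (θ n * a t) / θ n ^ 2) (f := fun _ => 0)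
    (fun t => a t ^ 2)
    (Eventually.of_forall fun n => ((measurable_logTaylorRemainder.comp_aemeasurable
      (ha.1.aemeasurable.const_mul _)).div_const _).aestronglyMeasurable)
    (hlb.mono fun n hn => hn.mono fun t ht => abs_logTaylorRemainder_mul_div_sq_le_sq ht)
    ha.integrable_sq
    (ae_of_all _ fun t => tendsto_logTaylorRemainder_mul_div_sq hθ (a t))
  simpa using hlim

lemma eventually_ae_neg_half_le_mul {α ι : Type*} [MeasurableSpace α] {μ : Measure α}
    {l : Filter ι} {a : α → ℝ} {θ : ι → ℝ} {c : ℝ} (hθ : Tendsto θ l (𝓝 0))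
    (hθ_nonneg : ∀ᶠ n in l, 0 ≤ θ n) (hc : 0 < c) (hpos : ∀ᵐ t ∂μ, 0 < 1 + c * a t) :
    ∀ᶠ n in l, ∀ᵐ t ∂μ, -(1 / 2) ≤ θ n * a t := by
  filter_upwards [hθ_nonneg, hθ.eventually (ge_mem_nhds (half_pos hc))] with n hn hnc
  filter_upwards [hpos] with t ht
  rcases le_or_gt 0 (a t) with hat | hat
  · nlinarith
  · nlinarith

theorem tendsto_integral_log_one_add_mul_sub_div_sq {α ι : Type*} [MeasurableSpace α]
    {μ : Measure α} {l : Filter ι} [l.IsCountablyGenerated] {a : α → ℝ} {θ : ι → ℝ}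
    (ha₁ : Integrable a μ) (ha₂ : MemLp a 2 μ) (hθ : Tendsto θ l (𝓝 0))
    (hθ_ne : ∀ᶠ n in l, θ n ≠ 0) (hlb : ∀ᶠ n in l, ∀ᵐ t ∂μ, -(1 / 2) ≤ θ n * a t) :
    Tendsto (fun n => ((∫ t, Real.log (1 + θ n * a t) ∂μ) - θ n * ∫ t, a t ∂μ) / θ n ^ 2) l
      (𝓝 (-(∫ t, a t ^ 2 ∂μ) / 2)) := by
  have hR := (tendsto_integral_logTaylorRemainder_mul_div_sq ha₂ hθ hlb).const_add
    (-(∫ t, a t ^ 2 ∂μ) / 2)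
  rw [add_zero] at hR
  refine hR.congr' ?_
  filter_upwards [hθ_ne, hlb] with n hn hnb
  have hRint : Integrable (fun t => logTaylorRemainder (θ n * a t)) μ := by
    refine (ha₂.integrable_sq.const_mul (θ n ^ 2)).mono' ?_ ?_
    · exact (measurable_logTaylorRemainder.comp_aemeasurable
        (ha₂.1.aemeasurable.const_mul _)).aestronglyMeasurable
    · filter_upwards [hnb] with t ht
      exact (abs_logTaylorRemainder_le_sq ht).trans_eq (by ring)
  have hlog : ∀ t, Real.log (1 + θ n * a t) =
      θ n * a t - θ n ^ 2 / 2 * a t ^ 2 + logTaylorRemainder (θ n * a t) := by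
    intro t; unfold logTaylorRemainder; ring
  have hpoly : Integrable (fun t => θ n * a t - θ n ^ 2 / 2 * a t ^ 2) μ :=
    (ha₁.const_mul _).sub (ha₂.integrable_sq.const_mul _)
  simp_rw [hlog]
  rw [integral_add hpoly hRint, integral_sub (ha₁.const_mul _) (ha₂.integrable_sq.const_mul _),
    integral_const_mul, integral_const_mul]
  field_simp
  ring

theorem e0n_asymptotics_general (a : ℝ → ℝ)
    (haL2 : MemLp a 2 (volume.restrict (Set.Ioo (0 : ℝ) 1)))
    (ha0 : ∫ t in Set.Ioo (0 : ℝ) 1, a t = 0)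
    (ha2 : ∫ t in Set.Ioo (0 : ℝ) 1, (a t) ^ 2 = 1)
    (θ : ℕ → ℝ) (hθpos : ∀ n, 0 < θ n)
    (hθ0 : Tendsto θ atTop (nhds 0))
    (hpos : ∀ n, ∀ᵐ t ∂(volume.restrict (Set.Ioo (0 : ℝ) 1)), 0 < 1 + θ n * a t) :
    Tendsto (fun n => (∫ t in Set.Ioo (0 : ℝ) 1, Real.log (1 + θ n * a t)) / (θ n) ^ 2)
      atTop (nhds (-(1 / 2))) := by
  have hlb := eventually_ae_neg_half_le_mul hθ0 (Eventually.of_forall fun n => (hθpos n).le)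
    (hθpos 0) (hpos 0)
  have key := tendsto_integral_log_one_add_mul_sub_div_sq (haL2.integrable one_le_two) haL2 hθ0
    (Eventually.of_forall fun n => (hθpos n).ne') hlb
  simpa [ha0, ha2, neg_div] using key

/-- If a ∈ L²(0,1), ∫ a = 0, ∫ a² = 1, θₙ → 0 positive, and 1 + θₙ a > 0 a.e.,
    then e₀ₙ = ∫₀¹ log(1 + θₙ a) dt satisfies e₀ₙ/θₙ² → -1/2. -/
theorem e0n_asymptotics (a : ℝ → ℝ)
    (ha_meas : AEMeasurable a (volume.restrict (Set.Ioo (0 : ℝ) 1)))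
    (haL2 : MemLp a 2 (volume.restrict (Set.Ioo (0 : ℝ) 1)))
    (ha0 : ∫ t in Set.Ioo (0 : ℝ) 1, a t = 0)
    (ha2 : ∫ t in Set.Ioo (0 : ℝ) 1, (a t) ^ 2 = 1)
    (θ : ℕ → ℝ) (hθpos : ∀ n, 0 < θ n)
    (hθ0 : Tendsto θ atTop (nhds 0))
    (hpos : ∀ n, ∀ᵐ t ∂(volume.restrict (Set.Ioo (0 : ℝ) 1)), 0 < 1 + θ n * a t) :
    Tendsto (fun n => (∫ t in Set.Ioo (0 : ℝ) 1, Real.log (1 + θ n * a t)) / (θ n) ^ 2)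
      atTop (nhds (-(1 / 2))) :=
  e0n_asymptotics_general a haL2 ha0 ha2 θ hθpos hθ0 hpos
end

section
/- If a ∈ L²(0,1) with ∫₀¹ a(t) dt = 0 and ∫₀¹ a²(t) dt = 1, and θₙ → 0 is a sequence of positive reals, then σ₀ₙ² := ∫₀¹ log²(1 + θₙ a(t)) dt - (∫₀¹ log(1 + θₙ a(t)) dt)² satisfies σ₀ₙ = θₙ(1 + o(1)), i.e., σ₀ₙ/θₙ → 1 as n → ∞. -/
/-!
Put `gₙ = log (1 + θₙ a) / θₙ`, so that `σ₀ₙ / θₙ = √(∫ gₙ² - (∫ gₙ)²)`.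
Since `log (1 + y) / y → 1`, `gₙ → a` pointwise. Positivity of `1 + θ₀ a` bounds `a` below
by `-1 / θ₀`, so once `θₙ ≤ θ₀ / 2` we have `θₙ a ≥ -1/2`, where `|log (1 + x)| ≤ 2 |x|`;
hence `|gₙ| ≤ 2 |a|`, which is square integrable. Dominated convergence gives
`∫ gₙ → ∫ a = 0` and `∫ gₙ² → ∫ a² = 1`.
-/

open MeasureTheory Filter Real Topology

lemma Real.abs_log_one_add_le_two_mul_abs {x : ℝ} (hx : -(1 / 2) ≤ x) :
    |log (1 + x)| ≤ 2 * |x| := by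
  have hx₀ : 0 < 1 + x := by linarith
  have h_upper : log (1 + x) ≤ x := by linarith [log_le_sub_one_of_pos hx₀]
  have h_lower : x / (1 + x) ≤ log (1 + x) := by
    have := one_sub_inv_le_log_of_pos hx₀
    rwa [← one_div, one_sub_div hx₀.ne', add_sub_cancel_left] at this
  rw [abs_le]
  rcases le_or_gt 0 x with h | h
  · rw [abs_of_nonneg h]
    exact ⟨by linarith [div_nonneg h hx₀.le], by linarith⟩
  · rw [abs_of_neg h]
    have : 2 * x ≤ x / (1 + x) := by rw [le_div_iff₀ hx₀]; nlinarith
    exact ⟨by linarith, by linarith⟩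

lemma Real.tendsto_log_one_add_mul_div (c : ℝ) :
    Tendsto (fun y => log (1 + y * c) / y) (𝓝[≠] 0) (𝓝 c) := by
  have h : HasDerivAt (fun y => log (1 + y * c)) c 0 := by
    simpa using ((hasDerivAt_mul_const c).const_add 1).log (by simp : (1 : ℝ) + 0 * c ≠ 0)
  refine h.tendsto_slope_zero.congr fun y => ?_
  simp [div_eq_inv_mul]

lemma Real.abs_log_one_add_mul_div_le {θ θ₀ c : ℝ} (hθ : 0 < θ) (hθθ₀ : θ ≤ θ₀ / 2)
    (hc : 0 < 1 + θ₀ * c) : |log (1 + θ * c) / θ| ≤ 2 * |c| := by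
  have hθc : -(1 / 2) ≤ θ * c := by
    rcases le_or_gt 0 c with h | h
    · linarith [mul_nonneg hθ.le h]
    · nlinarith
  calc |log (1 + θ * c) / θ| = |log (1 + θ * c)| / θ := by rw [abs_div, abs_of_pos hθ]
    _ ≤ 2 * |θ * c| / θ := by gcongr; exact abs_log_one_add_le_two_mul_abs hθc
    _ = 2 * |c| := by rw [abs_mul, abs_of_pos hθ]; field_simp

lemma tendsto_integral_sq_sub_sq_integral_of_dominated {α ι : Type*} [MeasurableSpace α]
    {μ : Measure α} [IsFiniteMeasure μ] {l : Filter ι} [l.IsCountablyGenerated]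
    {F : ι → α → ℝ} {f bound : α → ℝ}
    (hF_meas : ∀ᶠ i in l, AEStronglyMeasurable (F i) μ)
    (h_bound : ∀ᶠ i in l, ∀ᵐ x ∂μ, |F i x| ≤ bound x) (bound_memLp : MemLp bound 2 μ)
    (h_lim : ∀ᵐ x ∂μ, Tendsto (fun i => F i x) l (𝓝 (f x))) :
    Tendsto (fun i => (∫ x, F i x ^ 2 ∂μ) - (∫ x, F i x ∂μ) ^ 2) l
      (𝓝 ((∫ x, f x ^ 2 ∂μ) - (∫ x, f x ∂μ) ^ 2)) := by
  have h_sq : Tendsto (fun i => ∫ x, F i x ^ 2 ∂μ) l (𝓝 (∫ x, f x ^ 2 ∂μ)) := by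
    refine tendsto_integral_filter_of_dominated_convergence (fun x => bound x ^ 2)
      (hF_meas.mono fun i h => h.pow 2) ?_ bound_memLp.integrable_sq
      (h_lim.mono fun x h => h.pow 2)
    filter_upwards [h_bound] with i hi
    filter_upwards [hi] with x hx
    rw [norm_pow, Real.norm_eq_abs]
    exact pow_le_pow_left₀ (abs_nonneg _) hx 2
  have h_mean : Tendsto (fun i => ∫ x, F i x ∂μ) l (𝓝 (∫ x, f x ∂μ)) :=
    tendsto_integral_filter_of_dominated_convergence bound hF_meas h_bound
      (bound_memLp.integrable one_le_two) h_lim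
  exact h_sq.sub (h_mean.pow 2)

lemma sqrt_integral_sq_sub_sq_integral_div {α : Type*} [MeasurableSpace α] (μ : Measure α)
    (g : α → ℝ) {c : ℝ} (hc : 0 ≤ c) :
    √((∫ x, (g x / c) ^ 2 ∂μ) - (∫ x, g x / c ∂μ) ^ 2) =
      √((∫ x, g x ^ 2 ∂μ) - (∫ x, g x ∂μ) ^ 2) / c := by
  simp_rw [div_pow, integral_div, div_pow, div_sub_div_same]
  rw [sqrt_div' _ (sq_nonneg c), sqrt_sq hc]

theorem sigma0n_asymptotics_general (a : ℝ → ℝ)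
    (haL2 : MemLp a 2 (volume.restrict (Set.Ioo (0 : ℝ) 1)))
    (ha0 : ∫ t in Set.Ioo (0 : ℝ) 1, a t = 0)
    (ha2 : ∫ t in Set.Ioo (0 : ℝ) 1, (a t) ^ 2 = 1)
    (θ : ℕ → ℝ) (hθpos : ∀ n, 0 < θ n)
    (hθ0 : Tendsto θ atTop (nhds 0))
    (hpos : ∀ n, ∀ᵐ t ∂(volume.restrict (Set.Ioo (0 : ℝ) 1)), 0 < 1 + θ n * a t) :
    Tendsto (fun n =>
        Real.sqrt ((∫ t in Set.Ioo (0 : ℝ) 1, (Real.log (1 + θ n * a t)) ^ 2)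
          - (∫ t in Set.Ioo (0 : ℝ) 1, Real.log (1 + θ n * a t)) ^ 2) / θ n)
      atTop (nhds 1) := by
  have hθ_ne : Tendsto θ atTop (𝓝[≠] 0) :=
    tendsto_nhdsWithin_iff.2 ⟨hθ0, .of_forall fun n => (hθpos n).ne'⟩
  have h_small : ∀ᶠ n in atTop, θ n ≤ θ 0 / 2 :=
    hθ0.eventually (ge_mem_nhds (half_pos (hθpos 0)))
  have ha_meas := haL2.aestronglyMeasurable.aemeasurable
  have h_var := tendsto_integral_sq_sub_sq_integral_of_dominated
    (F := fun n t => log (1 + θ n * a t) / θ n) (bound := fun t => 2 * |a t|)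
    (.of_forall fun n => ((measurable_log.comp_aemeasurable
      ((ha_meas.const_mul _).const_add 1)).div_const _).aestronglyMeasurable)
    (by
      filter_upwards [h_small] with n hn
      filter_upwards [hpos 0] with t ht
      exact abs_log_one_add_mul_div_le (hθpos n) hn ht)
    (haL2.abs.const_mul 2)
    (.of_forall fun t => (tendsto_log_one_add_mul_div (a t)).comp hθ_ne)
  rw [ha0, ha2, zero_pow two_ne_zero, sub_zero] at h_var
  simpa [sqrt_integral_sq_sub_sq_integral_div, (hθpos _).le] using h_var.sqrt

/-- If a ∈ L²(0,1), ∫ a = 0, ∫ a² = 1, θₙ → 0 positive, and 1 + θₙ a > 0 a.e.,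
    then σ₀ₙ = √(∫ log²(1+θₙ a) - (∫ log(1+θₙ a))²) satisfies σ₀ₙ/θₙ → 1. -/
theorem sigma0n_asymptotics (a : ℝ → ℝ)
    (ha_meas : AEMeasurable a (volume.restrict (Set.Ioo (0 : ℝ) 1)))
    (haL2 : MemLp a 2 (volume.restrict (Set.Ioo (0 : ℝ) 1)))
    (ha0 : ∫ t in Set.Ioo (0 : ℝ) 1, a t = 0)
    (ha2 : ∫ t in Set.Ioo (0 : ℝ) 1, (a t) ^ 2 = 1)
    (θ : ℕ → ℝ) (hθpos : ∀ n, 0 < θ n)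
    (hθ0 : Tendsto θ atTop (nhds 0))
    (hpos : ∀ n, ∀ᵐ t ∂(volume.restrict (Set.Ioo (0 : ℝ) 1)), 0 < 1 + θ n * a t) :
    Tendsto (fun n =>
        Real.sqrt ((∫ t in Set.Ioo (0 : ℝ) 1, (Real.log (1 + θ n * a t)) ^ 2)
          - (∫ t in Set.Ioo (0 : ℝ) 1, Real.log (1 + θ n * a t)) ^ 2) / θ n)
      atTop (nhds 1) :=
  sigma0n_asymptotics_general a haL2 ha0 ha2 θ hθpos hθ0 hpos
end

section
/- The function h(y) = 2(y - log(1+y))/y² for y ≠ 0 (with h(0) = 1) is positive and strictly decreasing on (-1, ∞). -/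
/-!
Substituting `s = t y` in `y - log (1 + y) = ∫₀^y s / (1 + s) ds` gives
`h y = 2 ∫₀¹ t / (1 + t y) dt` for every `y > -1`, including `y = 0`. The integrand is positive
and, for `t > 0`, strictly decreasing in `y`, so both claims follow at once.
-/

open Real Set intervalIntegral

lemma one_add_mul_pos_of_mem_Icc {t y : ℝ} (ht : t ∈ Icc (0 : ℝ) 1) (hy : -1 < y) :
    0 < 1 + t * y := by
  rcases le_or_gt 0 y with hy0 | hy0
  · nlinarith [ht.1]
  · nlinarith [ht.2]

lemma continuousOn_div_one_add_mul {y : ℝ} (hy : -1 < y) :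
    ContinuousOn (fun t : ℝ => t / (1 + t * y)) (Icc 0 1) :=
  continuousOn_id.div (by fun_prop) fun _ ht => (one_add_mul_pos_of_mem_Icc ht hy).ne'

lemma integral_div_one_add_mul {y : ℝ} (hy : -1 < y) (hy0 : y ≠ 0) :
    ∫ t in (0 : ℝ)..1, t / (1 + t * y) = (y - log (1 + y)) / y ^ 2 := by
  have hderiv : ∀ t ∈ uIcc (0 : ℝ) 1,
      HasDerivAt (fun t => t / y - log (1 + t * y) / y ^ 2) (t / (1 + t * y)) t := by
    intro t ht
    rw [uIcc_of_le zero_le_one] at ht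
    have hpos := one_add_mul_pos_of_mem_Icc ht hy
    have hlog := (((hasDerivAt_id' t).mul_const y).const_add 1).log hpos.ne'
    refine (((hasDerivAt_id' t).div_const y).sub (hlog.div_const (y ^ 2))).congr_deriv ?_
    have hne : 1 + y * t ≠ 0 := by rw [mul_comm]; exact hpos.ne'
    field_simp
    ring
  rw [integral_eq_sub_of_hasDerivAt hderiv
    ((continuousOn_div_one_add_mul hy).intervalIntegrable_of_Icc zero_le_one)]
  simp only [one_mul, zero_div, zero_mul, add_zero, log_one, sub_zero]
  field_simp

lemma integral_div_one_add_mul_pos {y : ℝ} (hy : -1 < y) :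
    0 < ∫ t in (0 : ℝ)..1, t / (1 + t * y) :=
  intervalIntegral_pos_of_pos_on
    ((continuousOn_div_one_add_mul hy).intervalIntegrable_of_Icc zero_le_one)
    (fun _ ht => div_pos ht.1 (one_add_mul_pos_of_mem_Icc (Ioo_subset_Icc_self ht) hy))
    zero_lt_one

lemma strictAntiOn_integral_div_one_add_mul :
    StrictAntiOn (fun y : ℝ => ∫ t in (0 : ℝ)..1, t / (1 + t * y)) (Ioi (-1)) := by
  intro y₁ hy₁ y₂ hy₂ hlt
  have hlt_at : ∀ t ∈ Ioc (0 : ℝ) 1, t / (1 + t * y₂) < t / (1 + t * y₁) := fun t ht =>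
    div_lt_div_of_pos_left ht.1 (one_add_mul_pos_of_mem_Icc (Ioc_subset_Icc_self ht) hy₁)
      (by nlinarith [ht.1])
  exact integral_lt_integral_of_continuousOn_of_le_of_exists_lt zero_lt_one
    (continuousOn_div_one_add_mul hy₂) (continuousOn_div_one_add_mul hy₁)
    (fun t ht => (hlt_at t ht).le) ⟨1, right_mem_Icc.2 zero_le_one, hlt_at 1 ⟨zero_lt_one, le_rfl⟩⟩

/-- The function h(y) = 2(y - log(1+y))/y² (with h(0)=1) is positive and
    strictly decreasing on (-1, ∞). -/
theorem h_pos_strictAnti :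
    let h : ℝ → ℝ := fun y => if y = 0 then 1 else 2 * (y - Real.log (1 + y)) / y ^ 2
    (∀ y ∈ Set.Ioi (-1 : ℝ), 0 < h y) ∧ StrictAntiOn h (Set.Ioi (-1 : ℝ)) := by
  intro h
  have h_eq : EqOn h (fun y => 2 * ∫ t in (0 : ℝ)..1, t / (1 + t * y)) (Ioi (-1)) := by
    intro y hy
    by_cases hy0 : y = 0
    · simp [h, hy0]
    · simp only [h, if_neg hy0, integral_div_one_add_mul hy hy0, mul_div_assoc]
  refine ⟨fun y hy => ?_, fun y₁ hy₁ y₂ hy₂ hlt => ?_⟩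
  · rw [h_eq hy]
    exact mul_pos two_pos (integral_div_one_add_mul_pos hy)
  · rw [h_eq hy₁, h_eq hy₂]
    exact mul_lt_mul_of_pos_left (strictAntiOn_integral_div_one_add_mul hy₁ hy₂ hlt) two_pos
end

section
/- (Mogulskii's inequality) Let P, Q be probability measures on ℝ with Q ≪ P, let ξ₁,…,ξₙ be i.i.d. with law P and η₁,…,ηₙ i.i.d. with law Q. Then for every Borel set A ⊆ ℝ, every M ∈ ℝ, and every n ≥ 1: Pr((ξ₁+⋯+ξₙ)/n ∈ A)(1 - e^{-M}) + e^{-M} ≥ exp{-n D(Q‖P) - M pₙ}, where pₙ = Pr(η₁+⋯+ηₙ ∈ n·Aᶜ) and D(Q‖P) is the Kullback–Leibler divergence. -/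
/-!
Let `μ = Pⁿ`, `ν = Qⁿ`, `S = {x | (x₁ + ⋯ + xₙ)/n ∈ A}` and `g = -M · 1_{Sᶜ}`. The
Donsker–Varadhan (Gibbs) variational inequality `∫ g dν - D(ν‖μ) ≤ log ∫ eᵍ dμ` is the
nonnegativity of `D(ν‖μ_g)` for the tilted measure `dμ_g ∝ eᵍ dμ`. Here `∫ eᵍ dμ` is the left-hand
side of the theorem, `∫ g dν = -M pₙ`, and `D(ν‖μ) = n D(Q‖P)` because the log-likelihood ratio of
product measures is the sum of the coordinatewise ones.
-/

open Real MeasureTheory ProbabilityTheory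

namespace MeasureTheory

namespace Measure

variable {ι : Type*} [Fintype ι] {X : ι → Type*} [∀ i, MeasurableSpace (X i)]

lemma pi_withDensity (μ : (i : ι) → Measure (X i)) [∀ i, IsProbabilityMeasure (μ i)]
    {f : (i : ι) → X i → ENNReal} (hf : ∀ i, Measurable (f i))
    [∀ i, SigmaFinite ((μ i).withDensity (f i))] :
    Measure.pi (fun i => (μ i).withDensity (f i))
      = (Measure.pi μ).withDensity (fun x => ∏ i, f i (x i)) := by
  classical
  refine pi_eq fun s hs => ?_
  have hind : (Set.univ.pi s).indicator (fun x => ∏ i, f i (x i))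
      = fun x => ∏ i, (s i).indicator (f i) (x i) := by
    ext x
    simp only [Set.indicator_apply, Finset.prod_ite_zero, Set.mem_univ_pi, Finset.mem_univ,
      true_implies]
  rw [withDensity_apply _ (.univ_pi hs), ← lintegral_indicator (.univ_pi hs), hind,
    lintegral_prod_eq_prod_lintegral_of_indepFun _ _
      (iIndepFun_pi fun i => ((hf i).indicator (hs i)).aemeasurable)
      fun i => ((hf i).indicator (hs i)).comp (measurable_pi_apply i)]
  refine Finset.prod_congr rfl fun i _ => ?_
  rw [(measurePreserving_eval μ i).lintegral_comp ((hf i).indicator (hs i)),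
    lintegral_indicator (hs i), withDensity_apply _ (hs i)]

variable {μ ν : (i : ι) → Measure (X i)} [∀ i, IsProbabilityMeasure (μ i)]
  [∀ i, IsProbabilityMeasure (ν i)]

lemma pi_eq_withDensity_rnDeriv (hνμ : ∀ i, ν i ≪ μ i) :
    Measure.pi ν = (Measure.pi μ).withDensity (fun x => ∏ i, (ν i).rnDeriv (μ i) (x i)) := by
  conv_lhs => rw [← funext fun i => withDensity_rnDeriv_eq (ν i) (μ i) (hνμ i)]
  exact pi_withDensity μ fun i => measurable_rnDeriv _ _

lemma absolutelyContinuous_pi (hνμ : ∀ i, ν i ≪ μ i) : Measure.pi ν ≪ Measure.pi μ := by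
  rw [pi_eq_withDensity_rnDeriv hνμ]
  exact withDensity_absolutelyContinuous _ _

end Measure

section Tensorization

variable {ι : Type*} [Fintype ι] {X : ι → Type*} [∀ i, MeasurableSpace (X i)]
  {μ ν : (i : ι) → Measure (X i)} [∀ i, IsProbabilityMeasure (μ i)]
  [∀ i, IsProbabilityMeasure (ν i)]

lemma llr_pi_ae_eq (hνμ : ∀ i, ν i ≪ μ i) :
    llr (Measure.pi ν) (Measure.pi μ) =ᵐ[Measure.pi ν] fun x => ∑ i, llr (ν i) (μ i) (x i) := by
  have hrn : (Measure.pi ν).rnDeriv (Measure.pi μ) =ᵐ[Measure.pi ν]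
      fun x => ∏ i, (ν i).rnDeriv (μ i) (x i) := by
    refine (Measure.absolutelyContinuous_pi hνμ).ae_le ?_
    rw [Measure.pi_eq_withDensity_rnDeriv hνμ]
    exact Measure.rnDeriv_withDensity _ (Finset.measurable_prod _ fun i _ =>
      (Measure.measurable_rnDeriv _ _).comp (measurable_pi_apply i))
  -- `log` turns the product into a sum only where every factor is a positive real.
  have hfactors : ∀ᵐ x ∂Measure.pi ν, ∀ i,
      0 < (ν i).rnDeriv (μ i) (x i) ∧ (ν i).rnDeriv (μ i) (x i) < ⊤ := by
    rw [ae_all_iff]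
    exact fun i => (measurePreserving_eval ν i).quasiMeasurePreserving.ae
      ((Measure.rnDeriv_pos (hνμ i)).and ((hνμ i).ae_le (Measure.rnDeriv_lt_top _ _)))
  filter_upwards [hrn, hfactors] with x hx hx_factors
  rw [llr, hx, ENNReal.toReal_prod, Real.log_prod]
  · rfl
  · exact fun i _ => (ENNReal.toReal_pos (hx_factors i).1.ne' (hx_factors i).2.ne).ne'

variable (hνμ : ∀ i, ν i ≪ μ i) (h_int : ∀ i, Integrable (llr (ν i) (μ i)) (ν i))
include hνμ h_int

lemma integrable_llr_pi : Integrable (llr (Measure.pi ν) (Measure.pi μ)) (Measure.pi ν) :=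
  (integrable_congr (llr_pi_ae_eq hνμ)).2
    (integrable_finsetSum _ fun i _ => integrable_comp_eval (h_int i))

lemma integral_llr_pi :
    ∫ x, llr (Measure.pi ν) (Measure.pi μ) x ∂Measure.pi ν
      = ∑ i, ∫ x, llr (ν i) (μ i) x ∂ν i := by
  rw [integral_congr_ae (llr_pi_ae_eq hνμ),
    integral_finsetSum _ fun i _ => integrable_comp_eval (h_int i)]
  exact Finset.sum_congr rfl fun i _ => integral_comp_eval (h_int i).aestronglyMeasurable

end Tensorization

lemma exp_integral_sub_integral_llr_le_integral_exp {α : Type*} [MeasurableSpace α]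
    {μ ν : Measure α} [IsProbabilityMeasure μ] [IsProbabilityMeasure ν] (hνμ : ν ≪ μ)
    (h_int : Integrable (llr ν μ) ν) {g : α → ℝ} (hgν : Integrable g ν)
    (hgμ : Integrable (fun x => exp (g x)) μ) :
    exp (∫ x, g x ∂ν - ∫ x, llr ν μ x ∂ν) ≤ ∫ x, exp (g x) ∂μ := by
  have := isProbabilityMeasure_tilted hgμ
  have hgibbs := InformationTheory.integral_llr_add_sub_measure_univ_nonneg
    (hνμ.trans (absolutelyContinuous_tilted hgμ)) (integrable_llr_tilted_right hνμ hgν h_int hgμ)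
  rw [integral_llr_tilted_right hνμ hgν hgμ h_int, probReal_univ, probReal_univ] at hgibbs
  calc exp (∫ x, g x ∂ν - ∫ x, llr ν μ x ∂ν) ≤ exp (log (∫ x, exp (g x) ∂μ)) :=
        exp_le_exp.2 (by linarith)
    _ = ∫ x, exp (g x) ∂μ := exp_log (integral_exp_pos hgμ)

lemma exp_indicator_const {α : Type*} (s : Set α) (c : ℝ) :
    (fun x => exp (s.indicator (fun _ => c) x))
      = fun x => s.indicator (fun _ => exp c) x + sᶜ.indicator (fun _ => 1) x := by
  ext x
  by_cases hx : x ∈ s <;> simp [hx]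

section IndicatorConst

variable {α : Type*} [MeasurableSpace α] {μ : Measure α} [IsFiniteMeasure μ] {s : Set α}

lemma integrable_exp_indicator_const (hs : MeasurableSet s) (c : ℝ) :
    Integrable (fun x => exp (s.indicator (fun _ => c) x)) μ := by
  rw [exp_indicator_const]
  exact ((integrable_const _).indicator hs).add ((integrable_const _).indicator hs.compl)

lemma integral_exp_indicator_const (hs : MeasurableSet s) (c : ℝ) :
    ∫ x, exp (s.indicator (fun _ => c) x) ∂μ = μ.real s * exp c + μ.real sᶜ := by
  rw [exp_indicator_const, integral_add ((integrable_const _).indicator hs)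
      ((integrable_const _).indicator hs.compl), integral_indicator_const _ hs,
    integral_indicator_const _ hs.compl, smul_eq_mul, smul_eq_mul, mul_one]

end IndicatorConst

end MeasureTheory

/-- Mogulskii's inequality: for Q ≪ P with finite KL divergence D(Q‖P), a Borel
    set A, M ∈ ℝ and n ≥ 1,
    Pr_P((ξ₁+⋯+ξₙ)/n ∈ A)(1 - e^{-M}) + e^{-M} ≥ exp(-n D(Q‖P) - M pₙ),
    where pₙ = Pr_Q(η₁+⋯+ηₙ ∈ n·Aᶜ), stated on the n-fold product measures. -/
theorem mogulskii_inequality (P Q : Measure ℝ)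
    [IsProbabilityMeasure P] [IsProbabilityMeasure Q]
    (hac : Q ≪ P)
    (hD : Integrable (fun y => Real.log (Q.rnDeriv P y).toReal) Q)
    (A : Set ℝ) (hA : MeasurableSet A) (M : ℝ) (n : ℕ) (hn : 1 ≤ n) :
    (Measure.pi (fun _ : Fin n => P)
        {x | (∑ i, x i) / (n : ℝ) ∈ A}).toReal * (1 - Real.exp (-M)) + Real.exp (-M)
      ≥ Real.exp (-(n : ℝ) * (∫ y, Real.log (Q.rnDeriv P y).toReal ∂Q)
          - M * (Measure.pi (fun _ : Fin n => Q)
              {x | ∑ i, x i ∈ (fun y => (n : ℝ) * y) '' Aᶜ}).toReal) := by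
  set S := {x : Fin n → ℝ | (∑ i, x i) / (n : ℝ) ∈ A}
  have hS : MeasurableSet S :=
    (Finset.measurable_sum _ fun i _ => measurable_pi_apply i).div_const _ hA
  have hn0 : (n : ℝ) ≠ 0 := Nat.cast_ne_zero.2 (by omega)
  have hset : {x : Fin n → ℝ | ∑ i, x i ∈ (fun y => (n : ℝ) * y) '' Aᶜ} = Sᶜ := by
    rw [Set.image_eq_preimage_of_inverse (g := fun y => y / (n : ℝ))
      (fun y => by field_simp) (fun y => by field_simp)]
    rfl
  set μ := Measure.pi fun _ : Fin n => P
  set ν := Measure.pi fun _ : Fin n => Q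
  have hνμ : ∀ _ : Fin n, Q ≪ P := fun _ => hac
  have hllr : ∀ _ : Fin n, Integrable (llr Q P) Q := fun _ => hD
  rw [ge_iff_le, hset]
  calc exp (-(n : ℝ) * (∫ y, llr Q P y ∂Q) - M * ν.real Sᶜ)
      = exp (∫ x, Sᶜ.indicator (fun _ => -M) x ∂ν - ∫ x, llr ν μ x ∂ν) := by
        rw [integral_indicator_const _ hS.compl, integral_llr_pi hνμ hllr]
        simp only [Finset.sum_const, Finset.card_univ, Fintype.card_fin, nsmul_eq_mul, smul_eq_mul]
        congr 1
        ring
    _ ≤ ∫ x, exp (Sᶜ.indicator (fun _ => -M) x) ∂μ :=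
        exp_integral_sub_integral_llr_le_integral_exp (Measure.absolutelyContinuous_pi hνμ)
          (integrable_llr_pi hνμ hllr) ((integrable_const _).indicator hS.compl)
          (integrable_exp_indicator_const hS.compl _)
    _ = _ := by
        rw [integral_exp_indicator_const hS.compl, compl_compl, probReal_compl_eq_one_sub hS,
          measureReal_def]
        ring
end

section
/- (Classical moderate deviation theorem, upper bound) Let ξ₁, ξ₂, … be i.i.d. real random variables with Eξ₁ = 0, Var ξ₁ = 1, and φ(λ) = E e^{λξ₁} < ∞ for λ ∈ [0, Λ], Λ > 0. If xₙ > 0, xₙ → 0 and n xₙ² → ∞, then limsup_{n→∞} (1/(n xₙ²)) log Pr(Σᵢ₌₁ⁿ ξᵢ ≥ n xₙ) ≤ -1/2. -/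
open MeasureTheory ProbabilityTheory Filter
open Real Topology Set

/-!
Write `Sₙ = ξ₁ + ⋯ + ξₙ` and `K` for the cumulant generating function of `ξ₁`, so that
`K(t) / t² → 1/2` as `t → 0⁺` (dominated convergence, using `eᵘ - 1 - u ≤ u² e^{max u 0}`).
The Chernoff bound at `λ = xₙ` gives `log P(Sₙ ≥ n xₙ) ≤ -n xₙ² + n K(xₙ)`, whence the claim.

A lower bound is needed as well, because in Lean the `limsup` of a real sequence tending to
`-∞` is `0`. Cauchy–Schwarz for `Z = exp (4 xₙ Sₙ)` on the event `{Sₙ ≥ n xₙ}` gives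
`P(Sₙ ≥ n xₙ) ≥ (E Z - e^{4 n xₙ²})² / E Z²`, and the asymptotics of `K` at `4 xₙ` and `8 xₙ`
turn this into `log P(Sₙ ≥ n xₙ) ≥ -64 n xₙ²`.
-/

namespace Real

lemma exp_sub_one_sub_le_sq_mul_exp_max (u : ℝ) : exp u - 1 - u ≤ u ^ 2 * exp (max u 0) := by
  have key : exp u * (1 - u) ≤ 1 := by
    calc exp u * (1 - u) ≤ exp u * exp (-u) := by gcongr; linarith [add_one_le_exp (-u)]
      _ = 1 := by rw [← exp_add]; simp
  rcases le_total 0 u with hu | hu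
  · rw [max_eq_left hu]
    nlinarith [mul_nonneg hu (exp_pos u).le]
  · rw [max_eq_right hu, exp_zero, mul_one]
    nlinarith [exp_pos u]

lemma tendsto_exp_mul_sub_one_sub_div_sq (y : ℝ) :
    Tendsto (fun t => (exp (t * y) - 1 - t * y) / t ^ 2) (𝓝[≠] 0) (𝓝 (y ^ 2 / 2)) := by
  have hsmall : ∀ᶠ t in 𝓝 (0 : ℝ), |t * y| ≤ 1 := by
    have h : Tendsto (fun t : ℝ => |t * y|) (𝓝 0) (𝓝 0) := by
      simpa using (continuous_mul_const y).abs.tendsto 0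
    exact h.eventually (ge_mem_nhds one_pos)
  have hbound : ∀ᶠ t in 𝓝[≠] (0 : ℝ),
      ‖(exp (t * y) - 1 - t * y) / t ^ 2 - y ^ 2 / 2‖ ≤ |t| * |y| ^ 3 := by
    filter_upwards [self_mem_nhdsWithin, nhdsWithin_le_nhds hsmall] with t ht hty
    have hTaylor := exp_bound hty (n := 3) (by norm_num)
    simp only [Finset.sum_range_succ, Finset.sum_range_zero, Nat.factorial] at hTaylor
    norm_num at hTaylor
    have ht0 : t ≠ 0 := ht
    have ht2 : 0 < t ^ 2 := by positivity
    rw [Real.norm_eq_abs, show (exp (t * y) - 1 - t * y) / t ^ 2 - y ^ 2 / 2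
      = (exp (t * y) - (1 + t * y + (t * y) ^ 2 / 2)) / t ^ 2 by field_simp; ring,
      abs_div, abs_of_pos ht2, div_le_iff₀ ht2]
    calc _ ≤ (|t| * |y|) ^ 3 * (2 / 9) := hTaylor
      _ ≤ (|t| * |y|) ^ 3 := by
        nlinarith [pow_nonneg (mul_nonneg (abs_nonneg t) (abs_nonneg y)) 3]
      _ = |t| * |y| ^ 3 * t ^ 2 := by rw [← sq_abs t]; ring
  have hlim : Tendsto (fun t : ℝ => |t| * |y| ^ 3) (𝓝 0) (𝓝 0) := by
    have := (continuous_abs.mul_const (|y| ^ 3)).tendsto (0 : ℝ)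
    rwa [abs_zero, zero_mul] at this
  exact tendsto_sub_nhds_zero_iff.1
    (squeeze_zero_norm' hbound (hlim.mono_left nhdsWithin_le_nhds))

end Real

namespace ProbabilityTheory

variable {Ω : Type*} [MeasurableSpace Ω] {μ : Measure Ω} {X : Ω → ℝ}

lemma tendsto_integral_exp_mul_sub_one_sub_div_sq (hX : AEMeasurable X μ) {Λ : ℝ} (hΛ : 0 < Λ)
    (hX2 : Integrable (fun ω => X ω ^ 2) μ)
    (hexp : Integrable (fun ω => X ω ^ 2 * exp (Λ * X ω)) μ) :
    Tendsto (fun t => ∫ ω, (exp (t * X ω) - 1 - t * X ω) / t ^ 2 ∂μ) (𝓝[>] 0)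
      (𝓝 (∫ ω, X ω ^ 2 / 2 ∂μ)) := by
  refine tendsto_integral_filter_of_dominated_convergence
    (fun ω => X ω ^ 2 * (1 + exp (Λ * X ω))) (Eventually.of_forall fun t => by fun_prop)
    ?_ ?_ ?_
  · filter_upwards [Ioc_mem_nhdsGT hΛ] with t ⟨ht0, htΛ⟩
    refine ae_of_all _ fun ω => ?_
    have hmax : exp (max (t * X ω) 0) ≤ 1 + exp (Λ * X ω) := by
      rcases le_total 0 (X ω) with hX | hX
      · rw [max_eq_left (by positivity)]
        linarith [exp_le_exp.2 (mul_le_mul_of_nonneg_right htΛ hX)]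
      · rw [max_eq_right (mul_nonpos_of_nonneg_of_nonpos ht0.le hX), exp_zero]
        linarith [exp_pos (Λ * X ω)]
    have hnn : 0 ≤ exp (t * X ω) - 1 - t * X ω := by linarith [add_one_le_exp (t * X ω)]
    rw [Real.norm_of_nonneg (div_nonneg hnn (sq_nonneg t)), div_le_iff₀ (by positivity)]
    calc exp (t * X ω) - 1 - t * X ω ≤ (t * X ω) ^ 2 * exp (max (t * X ω) 0) :=
          exp_sub_one_sub_le_sq_mul_exp_max _
      _ ≤ (t * X ω) ^ 2 * (1 + exp (Λ * X ω)) := by gcongr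
      _ = X ω ^ 2 * (1 + exp (Λ * X ω)) * t ^ 2 := by ring
  · refine (hX2.add hexp).congr (ae_of_all _ fun ω => ?_)
    simp only [Pi.add_apply]
    ring
  · exact ae_of_all _ fun ω => (tendsto_exp_mul_sub_one_sub_div_sq (X ω)).mono_left
      (nhdsWithin_mono _ fun t ht => ne_of_gt ht)

lemma tendsto_mgf_sub_one_div_sq [IsProbabilityMeasure μ] (hX : AEMeasurable X μ)
    (hX2 : Integrable (fun ω => X ω ^ 2) μ) (hmean : ∫ ω, X ω ∂μ = 0) {Λ : ℝ} (hΛ : 0 < Λ)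
    (hexp : Icc 0 Λ ⊆ integrableExpSet X μ) :
    Tendsto (fun t => (mgf X μ t - 1) / t ^ 2) (𝓝[>] 0) (𝓝 ((∫ ω, X ω ^ 2 ∂μ) / 2)) := by
  have hX1 : Integrable X μ :=
    ((memLp_two_iff_integrable_sq hX.aestronglyMeasurable).2 hX2).integrable one_le_two
  have hmid : Λ / 2 ∈ interior (integrableExpSet X μ) :=
    interior_mono hexp (by rw [interior_Icc]; constructor <;> linarith)
  have h := tendsto_integral_exp_mul_sub_one_sub_div_sq hX (half_pos hΛ) hX2
    (integrable_pow_mul_exp_of_mem_interior_integrableExpSet hmid 2)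
  rw [integral_div] at h
  refine h.congr' ?_
  filter_upwards [Ioc_mem_nhdsGT hΛ] with t ⟨ht0, htΛ⟩
  have hexpt : Integrable (fun ω => exp (t * X ω)) μ := hexp ⟨ht0.le, htΛ⟩
  rw [integral_div, integral_sub (f := fun ω => exp (t * X ω) - 1)
      (hexpt.sub (integrable_const 1)) (hX1.const_mul t),
    integral_sub hexpt (integrable_const 1), integral_const_mul, hmean]
  simp [mgf]

lemma tendsto_cgf_div_sq [IsProbabilityMeasure μ] (hX : AEMeasurable X μ)
    (hX2 : Integrable (fun ω => X ω ^ 2) μ) (hmean : ∫ ω, X ω ∂μ = 0) {Λ : ℝ} (hΛ : 0 < Λ)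
    (hexp : Icc 0 Λ ⊆ integrableExpSet X μ) :
    Tendsto (fun t => cgf X μ t / t ^ 2) (𝓝[>] 0) (𝓝 ((∫ ω, X ω ^ 2 ∂μ) / 2)) := by
  have h := tendsto_mgf_sub_one_div_sq hX hX2 hmean hΛ hexp
  have hmgf_one : Tendsto (mgf X μ) (𝓝[>] 0) (𝓝 1) := by
    have hsq : Tendsto (fun t : ℝ => t ^ 2) (𝓝[>] 0) (𝓝 0) :=
      (continuous_pow 2).tendsto' 0 0 (by simp) |>.mono_left nhdsWithin_le_nhds
    have := (hsq.mul h).const_add 1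
    rw [zero_mul, add_zero] at this
    refine this.congr' ?_
    filter_upwards [self_mem_nhdsWithin] with t (ht : 0 < t)
    field_simp
    ring
  have hpos : ∀ᶠ t in 𝓝[>] 0, 0 < mgf X μ t := by
    filter_upwards [Ioc_mem_nhdsGT hΛ] with t ⟨ht0, htΛ⟩
    exact mgf_pos (hexp ⟨ht0.le, htΛ⟩)
  have hlower := h.div hmgf_one one_ne_zero
  rw [div_one] at hlower
  refine tendsto_of_tendsto_of_tendsto_of_le_of_le' hlower h ?_ ?_
  · filter_upwards [hpos] with t hM
    have hinv : (mgf X μ t - 1) / mgf X μ t = 1 - (mgf X μ t)⁻¹ := by field_simp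
    change (mgf X μ t - 1) / t ^ 2 / mgf X μ t ≤ log (mgf X μ t) / t ^ 2
    rw [div_right_comm, hinv]
    exact div_le_div_of_nonneg_right (one_sub_inv_le_log_of_pos hM) (sq_nonneg t)
  · filter_upwards [hpos] with t hM
    exact div_le_div_of_nonneg_right (log_le_sub_one_of_pos hM) (sq_nonneg t)

lemma sq_setIntegral_le_measureReal_mul_setIntegral_sq [IsFiniteMeasure μ] {Z : Ω → ℝ}
    (hZ : Integrable Z μ) (hZ2 : Integrable (fun ω => Z ω ^ 2) μ) (s : Set Ω) :
    (∫ ω in s, Z ω ∂μ) ^ 2 ≤ μ.real s * ∫ ω in s, Z ω ^ 2 ∂μ := by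
  have hquad : ∀ c : ℝ,
      0 ≤ μ.real s * (c * c) + (-2 * ∫ ω in s, Z ω ∂μ) * c + ∫ ω in s, Z ω ^ 2 ∂μ := by
    intro c
    have hg : Integrable (fun ω => Z ω ^ 2 + c ^ 2) (μ.restrict s) :=
      (hZ2.add (integrable_const (c ^ 2))).restrict
    have h := integral_mono (hZ.const_mul (2 * c)).restrict hg
      fun ω => by nlinarith [sq_nonneg (Z ω - c)]
    rw [integral_const_mul, integral_add hZ2.restrict (integrable_const _), setIntegral_const,
      smul_eq_mul] at h
    linarith
  have h := discrim_le_zero hquad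
  rw [discrim] at h
  linarith

lemma sq_mgf_sub_exp_le_measureReal_ge_mul_mgf [IsProbabilityMeasure μ] (hX : Measurable X)
    {t a : ℝ} (ht : 0 ≤ t) (hint : Integrable (fun ω => exp (t * X ω)) μ)
    (hint2 : Integrable (fun ω => exp (2 * t * X ω)) μ) (h : exp (t * a) ≤ mgf X μ t) :
    (mgf X μ t - exp (t * a)) ^ 2 ≤ μ.real {ω | a ≤ X ω} * mgf X μ (2 * t) := by
  set A := {ω | a ≤ X ω}
  have hA : MeasurableSet A := measurableSet_le measurable_const hX
  have hsq : (fun ω => exp (t * X ω) ^ 2) = fun ω => exp (2 * t * X ω) := by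
    funext ω
    rw [← exp_nat_mul]
    ring_nf
  have hcompl : ∫ ω in Aᶜ, exp (t * X ω) ∂μ ≤ exp (t * a) :=
    calc ∫ ω in Aᶜ, exp (t * X ω) ∂μ ≤ ∫ _ in Aᶜ, exp (t * a) ∂μ :=
          setIntegral_mono_on hint.integrableOn (integrable_const _).integrableOn hA.compl
            fun ω hω => exp_le_exp.2 <|
              mul_le_mul_of_nonneg_left (not_le.1 (show ¬a ≤ X ω from hω)).le ht
      _ = μ.real Aᶜ * exp (t * a) := setIntegral_const _
      _ ≤ exp (t * a) := mul_le_of_le_one_left (exp_pos _).le measureReal_le_one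
  have hA_lower : mgf X μ t - exp (t * a) ≤ ∫ ω in A, exp (t * X ω) ∂μ := by
    have := integral_add_compl hA hint
    rw [mgf]
    linarith
  calc (mgf X μ t - exp (t * a)) ^ 2 ≤ (∫ ω in A, exp (t * X ω) ∂μ) ^ 2 :=
        pow_le_pow_left₀ (sub_nonneg.2 h) hA_lower 2
    _ ≤ μ.real A * ∫ ω in A, exp (t * X ω) ^ 2 ∂μ :=
        sq_setIntegral_le_measureReal_mul_setIntegral_sq hint (hsq ▸ hint2) A
    _ ≤ μ.real A * mgf X μ (2 * t) := by
        gcongr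
        rw [hsq]
        exact setIntegral_le_integral hint2 (ae_of_all _ fun _ => (exp_pos _).le)

lemma exp_neg_cgf_two_mul_le_measureReal_ge [IsProbabilityMeasure μ] (hX : Measurable X)
    {t a : ℝ} (ht : 0 ≤ t) (ha : 0 ≤ a) (hint : Integrable (fun ω => exp (t * X ω)) μ)
    (hint2 : Integrable (fun ω => exp (2 * t * X ω)) μ) (h : t * a + 1 ≤ cgf X μ t) :
    exp (-cgf X μ (2 * t)) ≤ μ.real {ω | a ≤ X ω} := by
  have hgap : 1 ≤ mgf X μ t - exp (t * a) := by
    rw [← exp_cgf hint]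
    calc 1 ≤ exp (t * a) * (cgf X μ t - t * a) := by
          nlinarith [one_le_exp (mul_nonneg ht ha)]
      _ ≤ exp (t * a) * (exp (cgf X μ t - t * a) - 1) :=
          mul_le_mul_of_nonneg_left
            (by linarith [add_one_le_exp (cgf X μ t - t * a)]) (exp_pos _).le
      _ = exp (cgf X μ t) - exp (t * a) := by
          rw [mul_sub, ← exp_add, add_sub_cancel, mul_one]
  have hPZ := sq_mgf_sub_exp_le_measureReal_ge_mul_mgf hX ht hint hint2 (by linarith)
  rw [exp_neg, exp_cgf hint2, inv_le_iff_one_le_mul₀ (mgf_pos hint2)]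
  nlinarith

lemma log_measureReal_ge_le_cgf [IsFiniteMeasure μ] {t a : ℝ} (ht : 0 ≤ t)
    (hint : Integrable (fun ω => exp (t * X ω)) μ) (hpos : 0 < μ.real {ω | a ≤ X ω}) :
    log (μ.real {ω | a ≤ X ω}) ≤ -t * a + cgf X μ t :=
  (log_le_log hpos (measure_ge_le_exp_cgf a ht hint)).trans_eq (log_exp _)

lemma log_measureReal_ge_mem_Icc_of_cgf_eq_mul [IsProbabilityMeasure μ] (hX : Measurable X)
    {n : ℕ} {L : ℝ → ℝ} (hcgf : ∀ t, cgf X μ t = n * L t) {x : ℝ} (hx : 0 < x)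
    (hint1 : Integrable (fun ω => exp (x * X ω)) μ)
    (hint4 : Integrable (fun ω => exp (4 * x * X ω)) μ)
    (hint8 : Integrable (fun ω => exp (8 * x * X ω)) μ)
    (hL4 : 5 * x ^ 2 ≤ L (4 * x)) (hL8 : L (8 * x) ≤ 64 * x ^ 2) (hnx : 1 ≤ n * x ^ 2) :
    (1 / (n * x ^ 2)) * log (μ.real {ω | n * x ≤ X ω}) ∈ Icc (-64) (-1 + L x / x ^ 2) := by
  have hnx0 : 0 < (n : ℝ) * x ^ 2 := one_pos.trans_le hnx
  have hn0 : (n : ℝ) ≠ 0 := by rintro h; simp [h] at hnx0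
  have hlower : exp (-(64 * (n * x ^ 2))) ≤ μ.real {ω | n * x ≤ X ω} := by
    refine le_trans ?_ (exp_neg_cgf_two_mul_le_measureReal_ge hX (by positivity)
      (by positivity) hint4 (by convert hint8 using 4; ring) ?_)
    · rw [show 2 * (4 * x) = 8 * x by ring, hcgf]
      exact exp_le_exp.2 (by nlinarith)
    · rw [hcgf]
      nlinarith
  have hpos := (exp_pos _).trans_le hlower
  have hupper := log_measureReal_ge_le_cgf hx.le hint1 hpos
  rw [← le_log_iff_exp_le hpos] at hlower
  rw [hcgf] at hupper
  constructor
  · rw [one_div_mul_eq_div, le_div_iff₀ hnx0]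
    linarith
  · calc (1 / (n * x ^ 2)) * log (μ.real {ω | n * x ≤ X ω})
        ≤ (1 / (n * x ^ 2)) * (-x * (n * x) + n * L x) := by gcongr
      _ = -1 + L x / x ^ 2 := by field_simp

lemma iIndepFun.mgf_sum_range_eq_pow {ξ : ℕ → Ω → ℝ} (hmeas : ∀ i, Measurable (ξ i))
    (hindep : iIndepFun ξ μ) (hident : ∀ i, IdentDistrib (ξ i) (ξ 0) μ μ) (n : ℕ) (t : ℝ) :
    mgf (fun ω => ∑ i ∈ Finset.range n, ξ i ω) μ t = mgf (ξ 0) μ t ^ n := by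
  rw [← Finset.sum_fn, hindep.mgf_sum hmeas,
    Finset.prod_congr rfl fun i _ => mgf_congr_of_identDistrib _ _ (hident i) t,
    Finset.prod_const, Finset.card_range]

theorem limsup_log_measureReal_ge_le [IsProbabilityMeasure μ] {S : ℕ → Ω → ℝ}
    (hS : ∀ n, Measurable (S n))
    (hint : ∀ᶠ t in 𝓝[>] 0, ∀ n, Integrable (fun ω => exp (t * S n ω)) μ)
    {L : ℝ → ℝ} (hcgf : ∀ n t, cgf (S n) μ t = n * L t)
    (hL : Tendsto (fun t => L t / t ^ 2) (𝓝[>] 0) (𝓝 (1 / 2)))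
    {x : ℕ → ℝ} (hxpos : ∀ n, 0 < x n) (hx0 : Tendsto x atTop (𝓝 0))
    (hnx : Tendsto (fun n : ℕ => (n : ℝ) * x n ^ 2) atTop atTop) :
    limsup (fun n : ℕ => (1 / ((n : ℝ) * x n ^ 2)) * log (μ.real {ω | n * x n ≤ S n ω})) atTop
      ≤ -(1 / 2) := by
  have hcx : ∀ c : ℝ, 0 < c → Tendsto (fun n => c * x n) atTop (𝓝[>] 0) := fun c hc =>
    tendsto_nhdsWithin_iff.2
      ⟨by simpa using hx0.const_mul c, Eventually.of_forall fun n => mul_pos hc (hxpos n)⟩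
  have hx : Tendsto x atTop (𝓝[>] 0) := by simpa using hcx 1 one_pos
  have hupper : Tendsto (fun n => -1 + L (x n) / x n ^ 2) atTop (𝓝 (-(1 / 2))) := by
    have := (hL.comp hx).const_add (-1)
    norm_num at this ⊢
    exact this
  have hL4 : ∀ᶠ n in atTop, 5 * x n ^ 2 ≤ L (4 * x n) := by
    filter_upwards [(hL.comp (hcx 4 four_pos)).eventually (eventually_ge_nhds
      (by norm_num : (5 / 16 : ℝ) < 1 / 2))] with n hn
    have : 0 < (4 * x n) ^ 2 := by have := hxpos n; positivity
    rw [Function.comp_apply, le_div_iff₀ this] at hn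
    linarith
  have hL8 : ∀ᶠ n in atTop, L (8 * x n) ≤ 64 * x n ^ 2 := by
    filter_upwards [(hL.comp (hcx 8 (by norm_num))).eventually (eventually_le_nhds
      (by norm_num : (1 / 2 : ℝ) < 1))] with n hn
    have : 0 < (8 * x n) ^ 2 := by have := hxpos n; positivity
    rw [Function.comp_apply, div_le_iff₀ this] at hn
    linarith
  have hbounds : ∀ᶠ n : ℕ in atTop, (1 / ((n : ℝ) * x n ^ 2)) *
      log (μ.real {ω | n * x n ≤ S n ω}) ∈ Icc (-64) (-1 + L (x n) / x n ^ 2) := by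
    filter_upwards [hx.eventually hint, (hcx 4 four_pos).eventually hint,
      (hcx 8 (by norm_num)).eventually hint, hL4, hL8, hnx.eventually_ge_atTop 1]
      with n hint1 hint4 hint8 hL4 hL8 hnx1
    exact log_measureReal_ge_mem_Icc_of_cgf_eq_mul (hS n) (hcgf n) (hxpos n) (hint1 n)
      (hint4 n) (hint8 n) hL4 hL8 hnx1
  refine (limsup_le_limsup (hbounds.mono fun n h => h.2)
    (isCoboundedUnder_le_of_eventually_le atTop (hbounds.mono fun n h => h.1))
    hupper.isBoundedUnder_le).trans_eq hupper.limsup_eq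

end ProbabilityTheory

/-- Classical moderate deviation theorem, upper bound: for i.i.d. centered
    unit-variance ξᵢ with mgf finite on [0,Λ], and xₙ → 0 with n xₙ² → ∞,
    limsup (1/(n xₙ²)) log Pr(Σᵢ₌₁ⁿ ξᵢ ≥ n xₙ) ≤ -1/2. -/
theorem moderate_deviations_upper {Ω : Type*} [MeasureSpace Ω]
    [IsProbabilityMeasure (ℙ : Measure Ω)]
    (ξ : ℕ → Ω → ℝ) (hmeas : ∀ i, Measurable (ξ i))
    (hindep : iIndepFun ξ ℙ)
    (hident : ∀ i, Measure.map (ξ i) ℙ = Measure.map (ξ 0) ℙ)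
    (hmean : ∫ ω, ξ 0 ω = 0)
    (hvar : ∫ ω, (ξ 0 ω) ^ 2 = 1)
    (Λ : ℝ) (hΛ : 0 < Λ)
    (hmgf : ∀ l ∈ Set.Icc (0 : ℝ) Λ, Integrable (fun ω => Real.exp (l * ξ 0 ω)) ℙ)
    (x : ℕ → ℝ) (hxpos : ∀ n, 0 < x n)
    (hx0 : Tendsto x atTop (nhds 0))
    (hnx : Tendsto (fun n : ℕ => (n : ℝ) * (x n) ^ 2) atTop atTop) :
    limsup (fun n : ℕ => (1 / ((n : ℝ) * (x n) ^ 2)) *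
        Real.log (ℙ {ω | (n : ℝ) * x n ≤ ∑ i ∈ Finset.range n, ξ i ω}).toReal) atTop
      ≤ -(1 / 2) := by
  have hmgf_sum := iIndepFun.mgf_sum_range_eq_pow hmeas hindep
    fun i => ⟨(hmeas i).aemeasurable, (hmeas 0).aemeasurable, hident i⟩
  have hint : ∀ᶠ t in 𝓝[>] 0, ∀ n,
      Integrable (fun ω => exp (t * ∑ i ∈ Finset.range n, ξ i ω)) ℙ := by
    filter_upwards [Ioc_mem_nhdsGT hΛ] with t ht n
    refine mgf_pos_iff.1 ?_
    rw [hmgf_sum]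
    exact pow_pos (mgf_pos (hmgf t (Ioc_subset_Icc_self ht))) n
  have hcgf : ∀ n t, cgf (fun ω => ∑ i ∈ Finset.range n, ξ i ω) ℙ t = n * cgf (ξ 0) ℙ t :=
    fun n t => by rw [cgf, hmgf_sum, log_pow, cgf]
  have hL := tendsto_cgf_div_sq (hmeas 0).aemeasurable
    (.of_integral_ne_zero (by rw [hvar]; exact one_ne_zero)) hmean hΛ hmgf
  rw [hvar] at hL
  exact limsup_log_measureReal_ge_le
    (fun n => Finset.measurable_sum _ fun i _ => hmeas i) hint hcgf hL hxpos hx0 hnx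
end

section
/- Let gₙ(t) = 1 + (cₙ/θₙ)·1_{(θₙ,2θₙ)}(t) - √cₙ·1_{(1-√cₙ,1)}(t) on (0,1), where cₙ = xₙ^{(r+q)/q}, with θₙ → 0, xₙ → 0, cₙ/θₙ → ∞ (so cₙ → 0 and √cₙ < 1 eventually). Then gₙ is a probability density on (0,1) and the Kullback–Leibler divergence of the measure Γₙ with density gₙ from the uniform distribution P₀ satisfies D(Γₙ‖P₀) = cₙ log(cₙ/θₙ)(1 + o(1)). -/
/-!
On `(0, 1)` the density `gₙ` equals `1 + cₙ/θₙ` on an interval of length `θₙ`, `1 - √cₙ` on a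
disjoint interval of length `√cₙ`, and `1` elsewhere. Since `u log u` vanishes at `u = 1`,
`∫ gₙ log gₙ = (θₙ + cₙ) log (1 + cₙ/θₙ) + √cₙ (1 - √cₙ) log (1 - √cₙ)` exactly. As `cₙ/θₙ → ∞`
the first term is `cₙ log (cₙ/θₙ) (1 + o(1))`, while the second is `O(cₙ)`, hence
`o(cₙ log (cₙ/θₙ))`.
-/

open MeasureTheory Filter Set Real Topology
open scoped ENNReal

section StepFunction

variable {α : Type*} {I J : Set α}

lemma comp_one_add_indicator_sub_indicator (φ : ℝ → ℝ) (hφ : φ 1 = 0) (hIJ : Disjoint I J)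
    (a b : ℝ) (t : α) :
    φ (1 + a * I.indicator 1 t - b * J.indicator 1 t)
      = I.indicator (fun _ => φ (1 + a)) t + J.indicator (fun _ => φ (1 - b)) t := by
  by_cases hI : t ∈ I
  · simp [hI, hIJ.notMem_of_mem_left hI]
  · by_cases hJ : t ∈ J <;> simp [hI, hJ, hφ]

variable [MeasurableSpace α] {μ : Measure α}

lemma integrable_comp_one_add_indicator_sub_indicator (φ : ℝ → ℝ) (hφ : φ 1 = 0)
    (hIJ : Disjoint I J) (hI : MeasurableSet I) (hJ : MeasurableSet J)
    (hIμ : μ I ≠ ∞) (hJμ : μ J ≠ ∞) (a b : ℝ) :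
    Integrable (fun t => φ (1 + a * I.indicator 1 t - b * J.indicator 1 t)) μ := by
  simp_rw [comp_one_add_indicator_sub_indicator φ hφ hIJ]
  exact ((integrableOn_const hIμ).integrable_indicator hI).add
    ((integrableOn_const hJμ).integrable_indicator hJ)

lemma setIntegral_comp_one_add_indicator_sub_indicator (φ : ℝ → ℝ) (hφ : φ 1 = 0)
    (hIJ : Disjoint I J) (hI : MeasurableSet I) (hJ : MeasurableSet J)
    (hIμ : μ I ≠ ∞) (hJμ : μ J ≠ ∞) {S : Set α} (hIS : I ⊆ S) (hJS : J ⊆ S) (a b : ℝ) :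
    ∫ t in S, φ (1 + a * I.indicator 1 t - b * J.indicator 1 t) ∂μ
      = μ.real I * φ (1 + a) + μ.real J * φ (1 - b) := by
  simp_rw [comp_one_add_indicator_sub_indicator φ hφ hIJ]
  rw [integral_add ((integrableOn_const hIμ).integrable_indicator hI).restrict
      ((integrableOn_const hJμ).integrable_indicator hJ).restrict,
    integral_indicator_const _ hI, integral_indicator_const _ hJ,
    measureReal_restrict_apply hI, measureReal_restrict_apply hJ, inter_eq_left.2 hIS,
    inter_eq_left.2 hJS, smul_eq_mul, smul_eq_mul]

end StepFunction

noncomputable def stepDensity (θ a b t : ℝ) : ℝ :=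
  1 + a * (Ioo θ (2 * θ)).indicator 1 t - b * (Ioo (1 - b) 1).indicator 1 t

section StepDensity

variable {θ a b : ℝ}

lemma disjoint_Ioo_two_mul_Ioo_one_sub (hθb : 2 * θ ≤ 1 - b) :
    Disjoint (Ioo θ (2 * θ)) (Ioo (1 - b) 1) :=
  Ioo_disjoint_Ioo.2 ((min_le_left _ _).trans (hθb.trans (le_max_right _ _)))

lemma stepDensity_nonneg (ha : 0 ≤ a) (hb : b ≤ 1) (hθb : 2 * θ ≤ 1 - b) (t : ℝ) :
    0 ≤ stepDensity θ a b t := by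
  by_cases hI : t ∈ Ioo θ (2 * θ)
  · have hJ : t ∉ Ioo (1 - b) 1 := (disjoint_Ioo_two_mul_Ioo_one_sub hθb).notMem_of_mem_left hI
    simp only [stepDensity, indicator_of_mem hI, indicator_of_notMem hJ, Pi.one_apply]
    linarith
  · by_cases hJ : t ∈ Ioo (1 - b) 1 <;> simp [stepDensity, hI, hJ, hb]

lemma setIntegral_comp_stepDensity (φ : ℝ → ℝ) (hφ : φ 1 = 0) (hθ : 0 < θ) (hb : 0 ≤ b)
    (hθb : 2 * θ ≤ 1 - b) (a : ℝ) :
    ∫ t in Ioo 0 1, φ (stepDensity θ a b t) = θ * φ (1 + a) + b * φ (1 - b) := by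
  simp only [stepDensity]
  rw [setIntegral_comp_one_add_indicator_sub_indicator φ hφ
      (disjoint_Ioo_two_mul_Ioo_one_sub hθb) measurableSet_Ioo measurableSet_Ioo
      measure_Ioo_lt_top.ne measure_Ioo_lt_top.ne
      (Ioo_subset_Ioo hθ.le (by linarith)) (Ioo_subset_Ioo (by linarith) le_rfl),
    volume_real_Ioo_of_le (by linarith), volume_real_Ioo_of_le (by linarith)]
  ring

lemma setIntegral_stepDensity (hθ : 0 < θ) (hb : 0 ≤ b) (hθb : 2 * θ ≤ 1 - b)
    (a : ℝ) : ∫ t in Ioo 0 1, stepDensity θ a b t = 1 + θ * a - b * b := by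
  have hint : IntegrableOn (fun t => stepDensity θ a b t - 1) (Ioo 0 1) :=
    integrable_comp_one_add_indicator_sub_indicator (· - 1) (sub_self 1)
      (disjoint_Ioo_two_mul_Ioo_one_sub hθb) measurableSet_Ioo measurableSet_Ioo
      (measure_ne_top _ _) (measure_ne_top _ _) a b
  calc ∫ t in Ioo 0 1, stepDensity θ a b t
      = ∫ t in Ioo 0 1, ((stepDensity θ a b t - 1) + 1) := by simp
    _ = θ * (1 + a - 1) + b * (1 - b - 1) + 1 := by
      rw [integral_add hint (integrable_const 1),
        setIntegral_comp_stepDensity (· - 1) (sub_self 1) hθ hb hθb, setIntegral_const,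
        volume_real_Ioo_of_le zero_le_one]
      simp
    _ = 1 + θ * a - b * b := by ring

end StepDensity

lemma tendsto_add_one_mul_log_add_one_div_mul_log :
    Tendsto (fun u : ℝ => (u + 1) * log (u + 1) / (u * log u)) atTop (𝓝 1) := by
  have hfrac : Tendsto (fun u : ℝ => 1 + u⁻¹) atTop (𝓝 1) := by
    simpa using tendsto_inv_atTop_zero.const_add (1 : ℝ)
  have hlog : Tendsto (fun u : ℝ => 1 + (log (u + 1) - log u) / log u) atTop (𝓝 1) := by
    simpa using ((tendsto_log_comp_add_sub_log 1).div_atTop tendsto_log_atTop).const_add (1 : ℝ)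
  have hprod := hfrac.mul hlog
  rw [mul_one] at hprod
  refine hprod.congr' ?_
  filter_upwards [eventually_gt_atTop 1] with u hu
  have hL : log u ≠ 0 := (log_pos hu).ne'
  field_simp
  ring

lemma tendsto_one_sub_mul_log_one_sub_div :
    Tendsto (fun y : ℝ => (1 - y) * log (1 - y) / y) (𝓝[≠] 0) (𝓝 (-1)) := by
  have hderiv : HasDerivAt (fun y : ℝ => (1 - y) * log (1 - y)) (-1) 0 := by
    have h1 : HasDerivAt (fun y : ℝ => 1 - y) (-1) 0 := (hasDerivAt_id 0).const_sub 1
    exact (h1.fun_mul (h1.log (by norm_num))).congr_deriv (by norm_num)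
  refine hderiv.tendsto_slope_zero.congr fun y => ?_
  simp [div_eq_inv_mul]

lemma tendsto_setIntegral_stepDensity_mul_log_div {ι : Type*} {l : Filter ι} {θ c : ι → ℝ}
    (hθ : ∀ i, 0 < θ i) (hc : ∀ i, 0 < c i) (hc0 : Tendsto c l (𝓝 0))
    (hθc : ∀ᶠ i in l, 2 * θ i ≤ 1 - √(c i)) (hcθ : Tendsto (fun i => c i / θ i) l atTop) :
    Tendsto (fun i =>
      (∫ t in Ioo 0 1, stepDensity (θ i) (c i / θ i) √(c i) t *
          log (stepDensity (θ i) (c i / θ i) √(c i) t)) / (c i * log (c i / θ i))) l (𝓝 1) := by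
  have hb : Tendsto (fun i => √(c i)) l (𝓝[≠] 0) := by
    refine tendsto_nhdsWithin_iff.2 ⟨?_, .of_forall fun i => (sqrt_pos.2 (hc i)).ne'⟩
    simpa using hc0.sqrt
  have hlim := (tendsto_add_one_mul_log_add_one_div_mul_log.comp hcθ).add
    ((tendsto_one_sub_mul_log_one_sub_div.comp hb).div_atTop (tendsto_log_atTop.comp hcθ))
  rw [add_zero] at hlim
  -- with `u = c/θ` and `b = √c` the ratio is
  -- `(u + 1) log (u + 1) / (u log u) + ((1 - b) log (1 - b) / b) / log u`
  refine hlim.congr' ?_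
  filter_upwards [hθc, hcθ.eventually_gt_atTop 1] with i hi hu
  have hθi : θ i ≠ 0 := (hθ i).ne'
  have hci : c i ≠ 0 := (hc i).ne'
  have hL : log (c i / θ i) ≠ 0 := (log_pos hu).ne'
  have hs : √(c i) ≠ 0 := (sqrt_pos.2 (hc i)).ne'
  have hss : √(c i) * √(c i) = c i := mul_self_sqrt (hc i).le
  rw [setIntegral_comp_stepDensity (fun u => u * log u) (by simp) (hθ i) (sqrt_nonneg _) hi]
  simp only [Function.comp_apply]
  rw [add_comm 1 (c i / θ i)]
  field_simp
  linear_combination -(1 - √(c i)) * log (1 - √(c i)) * hss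

theorem density_KL_asymptotics_general (r q : ℝ)
    (hq : 0 < q) (hqr : q < r)
    (θ x : ℕ → ℝ) (hθpos : ∀ n, 0 < θ n) (hxpos : ∀ n, 0 < x n)
    (hθ0 : Tendsto θ atTop (nhds 0)) (hx0 : Tendsto x atTop (nhds 0))
    (c : ℕ → ℝ) (hc : ∀ n, c n = x n ^ ((r + q) / q))
    (hcθ : Tendsto (fun n => c n / θ n) atTop atTop)
    (g : ℕ → ℝ → ℝ)
    (hg : ∀ n t, g n t = 1 + (c n / θ n) * (Set.Ioo (θ n) (2 * θ n)).indicator 1 t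
        - Real.sqrt (c n) * (Set.Ioo (1 - Real.sqrt (c n)) 1).indicator 1 t) :
    (∀ᶠ n in atTop,
        (∀ t ∈ Set.Ioo (0 : ℝ) 1, 0 ≤ g n t) ∧
          ∫ t in Set.Ioo (0 : ℝ) 1, g n t = 1) ∧
      Tendsto (fun n =>
          (∫ t in Set.Ioo (0 : ℝ) 1, g n t * Real.log (g n t)) /
            (c n * Real.log (c n / θ n))) atTop (nhds 1) := by
  have hp : 0 < (r + q) / q := div_pos (by linarith) hq
  have hcpos (n : ℕ) : 0 < c n := hc n ▸ rpow_pos_of_pos (hxpos n) _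
  have hc0 : Tendsto c atTop (𝓝 0) := by
    simpa [funext hc, zero_rpow hp.ne'] using hx0.rpow_const (Or.inr hp.le)
  have hθc : ∀ᶠ n in atTop, 2 * θ n ≤ 1 - √(c n) := by
    filter_upwards [hθ0.eventually_lt_const (by norm_num : (0 : ℝ) < 1 / 4),
      (by simpa using hc0.sqrt : Tendsto (fun n => √(c n)) atTop (𝓝 0)).eventually_lt_const
        (by norm_num : (0 : ℝ) < 1 / 2)] with n hθn hcn
    linarith
  obtain rfl : g = fun n => stepDensity (θ n) (c n / θ n) √(c n) := funext fun n => funext (hg n)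
  refine ⟨?_, tendsto_setIntegral_stepDensity_mul_log_div hθpos hcpos hc0 hθc hcθ⟩
  filter_upwards [hθc] with n hn
  refine ⟨fun t _ => stepDensity_nonneg (div_pos (hcpos n) (hθpos n)).le
    (by linarith [hθpos n]) hn t, ?_⟩
  rw [setIntegral_stepDensity (hθpos n) (sqrt_nonneg _) hn, mul_div_cancel₀ _ (hθpos n).ne',
    mul_self_sqrt (hcpos n).le]
  ring

/-- With cₙ = xₙ^{(r+q)/q}, θₙ → 0, xₙ → 0, cₙ/θₙ → ∞, the function
    gₙ(t) = 1 + (cₙ/θₙ)1_{(θₙ,2θₙ)}(t) - √cₙ 1_{(1-√cₙ,1)}(t) is eventually a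
    probability density on (0,1), and D(Γₙ‖P₀) = ∫ gₙ log gₙ satisfies
    D(Γₙ‖P₀) = cₙ log(cₙ/θₙ)(1 + o(1)). -/
theorem density_KL_asymptotics (r q : ℝ) (hr : r ∈ Set.Ioo (0 : ℝ) (1 / 2))
    (hq : 0 < q) (hqr : q < r)
    (θ x : ℕ → ℝ) (hθpos : ∀ n, 0 < θ n) (hxpos : ∀ n, 0 < x n)
    (hθ0 : Tendsto θ atTop (nhds 0)) (hx0 : Tendsto x atTop (nhds 0))
    (c : ℕ → ℝ) (hc : ∀ n, c n = x n ^ ((r + q) / q))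
    (hcθ : Tendsto (fun n => c n / θ n) atTop atTop)
    (g : ℕ → ℝ → ℝ)
    (hg : ∀ n t, g n t = 1 + (c n / θ n) * (Set.Ioo (θ n) (2 * θ n)).indicator 1 t
        - Real.sqrt (c n) * (Set.Ioo (1 - Real.sqrt (c n)) 1).indicator 1 t) :
    (∀ᶠ n in atTop,
        (∀ t ∈ Set.Ioo (0 : ℝ) 1, 0 ≤ g n t) ∧
          ∫ t in Set.Ioo (0 : ℝ) 1, g n t = 1) ∧
      Tendsto (fun n =>
          (∫ t in Set.Ioo (0 : ℝ) 1, g n t * Real.log (g n t)) /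
            (c n * Real.log (c n / θ n))) atTop (nhds 1) :=
  density_KL_asymptotics_general r q hq hqr θ x hθpos hxpos hθ0 hx0 c hc hcθ g hg
end
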